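/- arXiv:2404.15125 — 2 statements merged into one kernel-verified Lean document; each statement's English description precedes it below -/
import Mathlib

section
/- Let k be a field, x ∈ N, and let V be a subfunctor of the N-module P(x). If V is generated in degrees ≤ n with respect to the sum norm, then V admits a presentation Q¹ → Q⁰ → V → 0 (an exact sequence of N-modules) in which Q⁰ is a direct sum of modules P(y) with sum norm of y at most n and Q¹ is a direct sum of modules P(y) with sum norm of y at most 2n. (That is, hd_1(V) ≤ 2·gd(V) with respect to the sum norm.) -/
/-!
Since `V` embeds in `P x`, every `V_z` has dimension at most one and every transition map of `V`
is injective. Let `Q⁰` be the direct sum of the `P y` over all pairs `(y, v)` with `‖y‖ ≤ n`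
and `v ∈ V_y`, the generator of `P y` going to `v`; it maps onto `V` because `V` is generated in
degrees `≤ n`. In a space of dimension at most one every linear relation among vectors is a sum
of relations involving two of them (compare each vector with a fixed one spanning the space). A
two-term relation between generators of degrees `y`, `y'` that holds in degree `z` already holds
in degree `y ⊔ y'` by injectivity, and `‖y ⊔ y'‖ ≤ ‖y‖ + ‖y'‖ ≤ 2n`. So the direct sum `Q¹`
of the `P (y ⊔ y')` over all two-term relations maps onto the kernel of `Q⁰ → V`.
-/

open CategoryTheory CategoryTheory.Limits

/-- The poset `ℕ →₀ ℕ` of finitely supported sequences of naturals, with pointwise order,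
regarded as a thin category. -/
abbrev NPoset := ℕ →₀ ℕ

/-- The sum norm of `x : ℕ →₀ ℕ` is `∑ i, x i`. -/
def sumNorm (x : NPoset) : ℕ := x.sum fun _ v => v

/-- `P x` is the `k`-linearization of the representable functor `N(x, -)`. -/
noncomputable def Pmod (k : Type) [Field k] (x : NPoset) : NPoset ⥤ ModuleCat k :=
  coyoneda.obj (Opposite.op x) ⋙ ModuleCat.free k

/-- `Q` is a (possibly infinite) direct sum of modules `P y` with `y ∈ S`. -/
def IsDirectSumOfP (k : Type) [Field k] (Q : NPoset ⥤ ModuleCat k) (S : Set NPoset) : Prop :=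
  ∃ (ι : Type) (g : ι → NPoset) (_ : ∀ j, g j ∈ S)
    (incl : ∀ j, Pmod k (g j) ⟶ Q), Nonempty (IsColimit (Cofan.mk Q incl))

/-- `V` is generated in degrees `≤ n` with respect to a norm. -/
def GeneratedInDeg {k : Type} [Field k] (norm : NPoset → ℕ)
    (V : NPoset ⥤ ModuleCat k) (n : ℕ) : Prop :=
  ∀ z : NPoset,
    (⨆ (y : NPoset) (h : y ≤ z) (_ : norm y ≤ n),
      LinearMap.range (V.map (homOfLE h)).hom) = ⊤

section PairRelations

variable {ι M : Type*} [AddCommGroup M]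

def pairRelations (R : Type*) [Ring R] [Module R M] (w : ι → M) : Set (ι →₀ R) :=
  {ξ | ∃ (i j : ι) (c c' : R), c • w i + c' • w j = 0 ∧
    Finsupp.single i c + Finsupp.single j c' = ξ}

theorem ker_linearCombination_le_span_pairRelations_of_forall_smul_eq {R : Type*} [Ring R]
    [Module R M] (w : ι → M) (a : ι) (hμ : ∀ i, ∃ μ : R, μ • w a = w i) :
    LinearMap.ker (Finsupp.linearCombination R w) ≤ Submodule.span R (pairRelations R w) := by
  classical
  choose μ hμ using hμ
  intro ξ hξ
  rw [LinearMap.mem_ker, Finsupp.linearCombination_apply] at hξ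
  set t := ∑ i ∈ ξ.support, ξ i * μ i
  -- subtracting `ξ i * μ i` times the `a`-th basis vector from each term leaves `t • e_a`
  have hdecomp : ξ = ∑ i ∈ ξ.support,
      (Finsupp.single i (ξ i) + Finsupp.single a (-(ξ i * μ i))) +
        (Finsupp.single a t + Finsupp.single a 0) := by
    rw [Finset.sum_add_distrib, ← Finsupp.single_finsetSum, Finset.sum_neg_distrib,
      Finsupp.single_zero, add_zero, add_assoc, ← Finsupp.single_add, neg_add_cancel,
      Finsupp.single_zero, add_zero]
    exact (Finsupp.sum_single ξ).symm
  have ht : t • w a = 0 := by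
    rw [Finset.sum_smul, ← hξ]
    exact Finset.sum_congr rfl fun i _ => by rw [mul_smul, hμ]
  rw [hdecomp]
  refine add_mem (sum_mem fun i _ => Submodule.subset_span ⟨i, a, _, _, ?_, rfl⟩)
    (Submodule.subset_span ⟨a, a, t, 0, by rw [ht, zero_smul, add_zero], rfl⟩)
  rw [← hμ i, neg_smul, mul_smul, add_neg_cancel]

theorem exists_forall_smul_eq_of_rank_le_one {k : Type*} [Field k] [Module k M] [Nonempty ι]
    (w : ι → M) (h : Module.rank k M ≤ 1) : ∃ a, ∀ i, ∃ μ : k, μ • w a = w i := by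
  obtain ⟨v₀, hv₀⟩ := rank_le_one_iff.mp h
  by_cases hw : ∃ a, w a ≠ 0
  · obtain ⟨a, ha⟩ := hw
    obtain ⟨r, hr⟩ := hv₀ (w a)
    have hr0 : r ≠ 0 := by rintro rfl; exact ha (hr ▸ zero_smul k v₀)
    refine ⟨a, fun i => ?_⟩
    obtain ⟨s, hs⟩ := hv₀ (w i)
    exact ⟨s / r, by rw [← hr, smul_smul, div_mul_cancel₀ s hr0, hs]⟩
  · push Not at hw
    exact ⟨Classical.arbitrary ι, fun i => ⟨0, by rw [zero_smul, hw]⟩⟩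

theorem ker_linearCombination_le_span_pairRelations_of_rank_le_one {k : Type*} [Field k]
    [Module k M] (w : ι → M) (h : Module.rank k M ≤ 1) :
    LinearMap.ker (Finsupp.linearCombination k w) ≤ Submodule.span k (pairRelations k w) := by
  cases isEmpty_or_nonempty ι
  · intro ξ _
    rw [Subsingleton.elim ξ 0]
    exact zero_mem _
  · obtain ⟨a, ha⟩ := exists_forall_smul_eq_of_rank_le_one w h
    exact ker_linearCombination_le_span_pairRelations_of_forall_smul_eq w a ha

end PairRelations

section NatTrans

variable {R : Type} [Ring R] {C : Type*} [Category C] {F G : C ⥤ ModuleCat R}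

lemma CategoryTheory.NatTrans.app_map_apply (α : F ⟶ G) {z z' : C} (f : z ⟶ z') (u : F.obj z) :
    α.app z' (F.map f u) = G.map f (α.app z u) :=
  ConcreteCategory.congr_hom (α.naturality f) u

lemma CategoryTheory.NatTrans.map_injective_of_app_injective (ν : F ⟶ G)
    (hν : ∀ z, Function.Injective (ν.app z)) {y z : C} (f : y ⟶ z)
    (hG : Function.Injective (G.map f)) : Function.Injective (F.map f) := fun u u' h =>
  hν y <| hG <| by rw [← ν.app_map_apply, ← ν.app_map_apply, h]

end NatTrans

section FreeSum

variable {R : Type} [Ring R] {C : Type*} [Category.{0} C]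

noncomputable def freeCoyonedaLift (W : C ⥤ ModuleCat R) {c : C} (v : W.obj c) :
    coyoneda.obj (Opposite.op c) ⋙ ModuleCat.free R ⟶ W where
  app z := ModuleCat.freeDesc (↾fun f : c ⟶ z => W.map f v)
  naturality z z' f := by
    refine ModuleCat.free_hom_ext fun g => ?_
    simp [ModuleCat.free_map_apply]

@[simp] lemma freeCoyonedaLift_app_freeMk (W : C ⥤ ModuleCat R) {c z : C} (v : W.obj c)
    (f : c ⟶ z) : (freeCoyonedaLift W v).app z (ModuleCat.freeMk f) = W.map f v :=
  ModuleCat.freeDesc_apply _ _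

abbrev sigmaCoyoneda {ι : Type} (g : ι → C) : C ⥤ Type where
  obj z := Σ j, (g j ⟶ z)
  map f := ↾fun p => ⟨p.1, p.2 ≫ f⟩

noncomputable abbrev freeSum (R : Type) [Ring R] {ι : Type} (g : ι → C) : C ⥤ ModuleCat R :=
  sigmaCoyoneda g ⋙ ModuleCat.free R

namespace freeSum

variable {ι : Type} {g : ι → C}

noncomputable def inj (R : Type) [Ring R] (g : ι → C) (j : ι) :
    coyoneda.obj (Opposite.op (g j)) ⋙ ModuleCat.free R ⟶ freeSum R g :=
  Functor.whiskerRight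
    ({ app _ := ↾fun f => ⟨j, f⟩ } : coyoneda.obj (Opposite.op (g j)) ⟶ sigmaCoyoneda g)
    (ModuleCat.free R)

@[simp] lemma inj_app_freeMk (j : ι) {z : C} (f : g j ⟶ z) :
    (inj R g j).app z (ModuleCat.freeMk f) = ModuleCat.freeMk (⟨j, f⟩ : Σ i, (g i ⟶ z)) :=
  ModuleCat.free_map_apply _ _

@[simp] lemma map_freeMk {z z' : C} (f : z ⟶ z') (p : Σ j, (g j ⟶ z)) :
    (freeSum R g).map f (ModuleCat.freeMk p) =
      ModuleCat.freeMk (⟨p.1, p.2 ≫ f⟩ : Σ j, (g j ⟶ z')) :=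
  ModuleCat.free_map_apply _ _

lemma app_hom_ext {z : C} {M : ModuleCat R} {φ ψ : (freeSum R g).obj z ⟶ M}
    (h : ∀ p : Σ j, (g j ⟶ z), φ (ModuleCat.freeMk p) = ψ (ModuleCat.freeMk p)) : φ = ψ :=
  ModuleCat.free_hom_ext h

noncomputable def desc {W : C ⥤ ModuleCat R}
    (t : ∀ j, coyoneda.obj (Opposite.op (g j)) ⋙ ModuleCat.free R ⟶ W) :
    freeSum R g ⟶ W where
  app z := ModuleCat.freeDesc (↾fun p : Σ j, (g j ⟶ z) => (t p.1).app z (ModuleCat.freeMk p.2))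
  naturality z z' f := by
    refine ModuleCat.free_hom_ext fun p => ?_
    simp [ModuleCat.free_map_apply, ← NatTrans.app_map_apply]

@[simp] lemma desc_app_freeMk {W : C ⥤ ModuleCat R}
    (t : ∀ j, coyoneda.obj (Opposite.op (g j)) ⋙ ModuleCat.free R ⟶ W) {z : C}
    (p : Σ j, (g j ⟶ z)) :
    (desc t).app z (ModuleCat.freeMk p) = (t p.1).app z (ModuleCat.freeMk p.2) :=
  ModuleCat.freeDesc_apply _ _

noncomputable def isColimit (R : Type) [Ring R] (g : ι → C) :
    IsColimit (Cofan.mk (freeSum R g) (inj R g)) := by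
  refine Cofan.IsColimit.mk _ (fun s => desc s.inj) (fun s j => ?_) (fun s m hm => ?_)
  · ext z : 2
    refine ModuleCat.free_hom_ext fun f => ?_
    erw [ModuleCat.comp_apply, inj_app_freeMk, desc_app_freeMk]
  · ext z : 2
    refine ModuleCat.free_hom_ext fun ⟨j, f⟩ => ?_
    erw [desc_app_freeMk, ← inj_app_freeMk]
    exact ConcreteCategory.congr_hom (congrArg (fun α => NatTrans.app α z) (hm j)) _

end freeSum

end FreeSum

theorem freeSum_isDirectSumOfP {k : Type} [Field k] {ι : Type} (g : ι → NPoset) (S : Set NPoset)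
    (hS : ∀ j, g j ∈ S) : IsDirectSumOfP k (freeSum k g) S :=
  ⟨ι, g, hS, freeSum.inj k g, ⟨freeSum.isColimit k g⟩⟩

section Generators

variable {R : Type} [Ring R] {P : Type} [Preorder P]

lemma CategoryTheory.Functor.map_map_apply_of_thin (V : P ⥤ ModuleCat R) {x y z : P}
    (g : x ⟶ y) (f : y ⟶ z) (h : x ⟶ z) (u : V.obj x) : V.map f (V.map g u) = V.map h u := by
  rw [← ModuleCat.comp_apply, ← V.map_comp, Subsingleton.elim (g ≫ f) h]

structure Generator (S : Set P) (V : P ⥤ ModuleCat R) where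
  deg : P
  mem : deg ∈ S
  elem : V.obj deg

variable (S : Set P) (V : P ⥤ ModuleCat R)

noncomputable abbrev genModule : P ⥤ ModuleCat R :=
  freeSum R (Generator.deg : Generator S V → P)

noncomputable def genMap : genModule S V ⟶ V :=
  freeSum.desc fun i => freeCoyonedaLift V i.elem

variable {S V}

lemma genMap_app_freeMk {z : P} (p : Σ i : Generator S V, (i.deg ⟶ z)) :
    (genMap S V).app z (ModuleCat.freeMk p) = V.map p.2 p.1.elem := by
  rw [genMap, freeSum.desc_app_freeMk, freeCoyonedaLift_app_freeMk]

lemma genMap_app_hom (z : P) :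
    ((genMap S V).app z).hom = Finsupp.linearCombination R
      fun p : Σ i : Generator S V, (i.deg ⟶ z) => V.map p.2 p.1.elem :=
  Finsupp.lhom_ext' fun p => LinearMap.ext_ring <| by
    erw [genMap_app_freeMk, LinearMap.comp_apply, Finsupp.lsingle_apply,
      Finsupp.linearCombination_single, one_smul]

theorem genMap_app_surjective
    (hgen : ∀ z, ⨆ (y : P) (h : y ≤ z) (_ : y ∈ S),
      LinearMap.range (V.map (homOfLE h)).hom = ⊤)
    (z : P) : Function.Surjective ((genMap S V).app z) := by
  rw [← LinearMap.range_eq_top (f := ((genMap S V).app z).hom), eq_top_iff, ← hgen z]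
  refine iSup_le fun y => iSup₂_le fun h hy => ?_
  rintro _ ⟨v, rfl⟩
  exact ⟨ModuleCat.freeMk ⟨⟨y, hy, v⟩, homOfLE h⟩, genMap_app_freeMk _⟩

end Generators

section Relations

variable {R : Type} [Ring R] {P : Type} [SemilatticeSup P]

structure PairRelation (S : Set P) (V : P ⥤ ModuleCat R) where
  fst : Generator S V
  snd : Generator S V
  c : R
  c' : R
  eq : c • V.map (homOfLE (le_sup_left : fst.deg ≤ fst.deg ⊔ snd.deg)) fst.elem +
    c' • V.map (homOfLE (le_sup_right : snd.deg ≤ fst.deg ⊔ snd.deg)) snd.elem = 0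

variable {S : Set P} {V : P ⥤ ModuleCat R}

def PairRelation.deg (r : PairRelation S V) : P := r.fst.deg ⊔ r.snd.deg

noncomputable def PairRelation.elem (r : PairRelation S V) : (genModule S V).obj r.deg :=
  r.c • ModuleCat.freeMk (X := Σ i : Generator S V, (i.deg ⟶ r.deg))
      ⟨r.fst, homOfLE le_sup_left⟩ +
    r.c' • ModuleCat.freeMk (X := Σ i : Generator S V, (i.deg ⟶ r.deg))
      ⟨r.snd, homOfLE le_sup_right⟩

variable (S V)

noncomputable abbrev relModule : P ⥤ ModuleCat R :=
  freeSum R (PairRelation.deg : PairRelation S V → P)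

noncomputable def relMap : relModule S V ⟶ genModule S V :=
  freeSum.desc fun r => freeCoyonedaLift _ r.elem

variable {S V}

lemma genMap_app_elem (r : PairRelation S V) : (genMap S V).app r.deg r.elem = 0 := by
  rw [PairRelation.elem, map_add, map_smul, map_smul, genMap_app_freeMk, genMap_app_freeMk]
  exact r.eq

lemma relMap_app_freeMk {z : P} (r : PairRelation S V) (f : r.deg ⟶ z) :
    (relMap S V).app z (ModuleCat.freeMk ⟨r, f⟩) = (genModule S V).map f r.elem := by
  rw [relMap, freeSum.desc_app_freeMk, freeCoyonedaLift_app_freeMk]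

lemma relMap_app_comp_genMap_app (z : P) : (relMap S V).app z ≫ (genMap S V).app z = 0 :=
  freeSum.app_hom_ext fun ⟨r, f⟩ => by
    rw [ModuleCat.comp_apply, relMap_app_freeMk, NatTrans.app_map_apply, genMap_app_elem,
      map_zero]
    rfl

lemma span_pairRelations_le_range_relMap_app
    (hinj : ∀ ⦃y z : P⦄ (f : y ⟶ z), Function.Injective (V.map f)) (z : P) :
    Submodule.span R (pairRelations R fun p : Σ i : Generator S V, (i.deg ⟶ z) =>
      V.map p.2 p.1.elem) ≤ LinearMap.range ((relMap S V).app z).hom := by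
  refine Submodule.span_le.mpr ?_
  rintro _ ⟨⟨a, fa⟩, ⟨b, fb⟩, c, c', hab, rfl⟩
  have hle : a.deg ⊔ b.deg ≤ z := sup_le (leOfHom fa) (leOfHom fb)
  let r : PairRelation S V := ⟨a, b, c, c', hinj (homOfLE hle) (by
    rwa [map_add, map_smul, map_smul, V.map_map_apply_of_thin _ _ fa,
      V.map_map_apply_of_thin _ _ fb, map_zero])⟩
  refine ⟨ModuleCat.freeMk ⟨r, homOfLE hle⟩, ?_⟩
  rw [relMap_app_freeMk, PairRelation.elem, map_add, map_smul, map_smul, freeSum.map_freeMk,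
    freeSum.map_freeMk]
  exact congrArg₂ (· + ·) (Finsupp.smul_single_one _ c) (Finsupp.smul_single_one _ c')

theorem exact_relMap_app_genMap_app {k : Type} [Field k] {S : Set P} {V : P ⥤ ModuleCat k}
    (hinj : ∀ ⦃y z : P⦄ (f : y ⟶ z), Function.Injective (V.map f))
    (hrank : ∀ z, Module.rank k (V.obj z) ≤ 1) (z : P) :
    Function.Exact ((relMap S V).app z) ((genMap S V).app z) := by
  rw [LinearMap.exact_iff]
  refine le_antisymm ?_ (LinearMap.range_le_ker_iff.mpr ?_)
  · have hker := ker_linearCombination_le_span_pairRelations_of_rank_le_one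
      (fun p : Σ i : Generator S V, (i.deg ⟶ z) => V.map p.2 p.1.elem) (hrank z)
    rw [← genMap_app_hom] at hker
    exact hker.trans (span_pairRelations_le_range_relMap_app hinj z)
  · exact congrArg ModuleCat.Hom.hom (relMap_app_comp_genMap_app z)

end Relations

lemma sumNorm_sup_le (a b : NPoset) : sumNorm (a ⊔ b) ≤ sumNorm a + sumNorm b :=
  show Finsupp.degree (a ⊔ b) ≤ Finsupp.degree a + Finsupp.degree b by
    rw [← map_add]
    exact Finsupp.degree_mono (sup_le le_self_add le_add_self)

lemma Pmod_map_injective {k : Type} [Field k] (x : NPoset) {y z : NPoset} (f : y ⟶ z) :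
    Function.Injective ((Pmod k x).map f) :=
  Finsupp.mapDomain_injective fun _ _ _ => Subsingleton.elim (α := x ⟶ y) _ _

lemma rank_Pmod_obj_le_one {k : Type} [Field k] (x z : NPoset) :
    Module.rank k ((Pmod k x).obj z) ≤ 1 :=
  show Module.rank k ((x ⟶ z) →₀ k) ≤ 1 by
    rw [rank_finsupp_self', Cardinal.le_one_iff_subsingleton]
    infer_instance

/-- Let `k` be a field and let `V` be a subfunctor of `P x` that is generated in degrees `≤ n`
with respect to the sum norm.  Then `V` admits a presentation `Q¹ → Q⁰ → V → 0` in which `Q⁰`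
is a direct sum of modules `P y` with `sumNorm y ≤ n` and `Q¹` is a direct sum of modules `P y`
with `sumNorm y ≤ 2 * n`.  (That is, `hd₁ V ≤ 2 · gd V`.) -/
theorem stmt6 {k : Type} [Field k] (x : NPoset) (V : NPoset ⥤ ModuleCat k)
    (ν : V ⟶ Pmod k x) (hmono : ∀ z : NPoset, Function.Injective (ν.app z))
    (n : ℕ) (hgen : GeneratedInDeg sumNorm V n) :
    ∃ (Q1 Q0 : NPoset ⥤ ModuleCat k) (d : Q1 ⟶ Q0) (p : Q0 ⟶ V),
      IsDirectSumOfP k Q1 {y | sumNorm y ≤ 2 * n} ∧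
      IsDirectSumOfP k Q0 {y | sumNorm y ≤ n} ∧
      (∀ z : NPoset, Function.Surjective (p.app z)) ∧
      (∀ z : NPoset, Function.Exact (d.app z) (p.app z)) := by
  let S : Set NPoset := {y | sumNorm y ≤ n}
  have hinj : ∀ ⦃y z : NPoset⦄ (f : y ⟶ z), Function.Injective (V.map f) := fun _ _ f =>
    ν.map_injective_of_app_injective hmono f (Pmod_map_injective x f)
  have hrank : ∀ z, Module.rank k (V.obj z) ≤ 1 := fun z =>
    (LinearMap.rank_le_of_injective _ (hmono z)).trans (rank_Pmod_obj_le_one x z)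
  have hdeg : ∀ r : PairRelation S V, sumNorm r.deg ≤ 2 * n := fun r =>
    (sumNorm_sup_le _ _).trans (two_mul n ▸ add_le_add r.fst.mem r.snd.mem)
  exact ⟨_, _, relMap S V, genMap S V, freeSum_isDirectSumOfP _ _ hdeg,
    freeSum_isDirectSumOfP _ _ Generator.mem, genMap_app_surjective hgen,
    exact_relMap_app_genMap_app hinj hrank⟩
end

section
/- Let k be a field and x ∈ N. Every finitely generated subfunctor V of the N-module P(x) is finitely presented: if V admits an epimorphism from a finite direct sum of modules P(y_1), …, P(y_r), then V is the cokernel of a morphism between two finite direct sums of modules of the form P(y). (Thus the category algebra kN is locally left coherent, and finitely generated N-submodules of free modules are coherent.) -/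
open CategoryTheory CategoryTheory.Limits

/-- `Q` is a finite direct sum of modules `P y`. -/
def IsFiniteDirectSumOfP (k : Type) [Field k] (Q : NPoset ⥤ ModuleCat k) : Prop :=
  ∃ (ι : Type) (_ : Fintype ι) (g : ι → NPoset)
    (incl : ∀ j, Pmod k (g j) ⟶ Q), Nonempty (IsColimit (Cofan.mk Q incl))

/-!
Since `N` is thin, `P(x)_z` is `k` or `0`. Composing a map `⊕ⱼ P(g j) → V ⊆ P(x)` with the
coefficient sum `P(x)_z → k` therefore loses nothing, and gives a natural functional
`σ_z(v) = ∑ⱼ cⱼ · (coefficient sum of vⱼ)` for scalars `cⱼ`; so the kernel is `ker σ`. It is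
generated by the finitely many elements `cⱼ eᵢ - cᵢ eⱼ` in degree `g i ⊔ g j` and `eⱼ` in
degree `g j` for `cⱼ = 0`: modulo them, `cᵢ v ≡ σ(v) eᵢ` for any `i` with `cᵢ ≠ 0`.
-/

theorem LinearMap.ker_le_of_smul_sub_smul_mem {K M ι : Type*} [Field K] [AddCommGroup M]
    [Module K M] (σ : M →ₗ[K] K) {e : ι → M} (he : Submodule.span K (Set.range e) = ⊤)
    {S : Submodule K M} (hpair : ∀ i j, σ (e j) • e i - σ (e i) • e j ∈ S)
    (hzero : ∀ i, σ (e i) = 0 → e i ∈ S) : LinearMap.ker σ ≤ S := by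
  by_cases h : ∃ i, σ (e i) ≠ 0
  · obtain ⟨i, hi⟩ := h
    have key : σ (e i) • S.mkQ = σ.smulRight (S.mkQ (e i)) := by
      refine LinearMap.ext_on_range he fun j => ?_
      rw [LinearMap.smul_apply, LinearMap.smulRight_apply, ← map_smul, ← map_smul, eq_comm,
        ← sub_eq_zero, ← map_sub, Submodule.mkQ_apply, Submodule.Quotient.mk_eq_zero]
      exact hpair i j
    intro v hv
    have hv' := LinearMap.congr_fun key v
    rw [LinearMap.smul_apply, LinearMap.smulRight_apply, LinearMap.mem_ker.1 hv, zero_smul,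
      smul_eq_zero_iff_right hi, Submodule.mkQ_apply, Submodule.Quotient.mk_eq_zero] at hv'
    exact hv'
  · push Not at h
    calc LinearMap.ker σ ≤ Submodule.span K (Set.range e) := he ▸ le_top
      _ ≤ S := Submodule.span_le.2 <| Set.range_subset_iff.2 fun i => hzero i (h i)

lemma Finsupp.linearCombination_one_injective {K α : Type*} [Semiring K] [Subsingleton α] :
    Function.Injective (Finsupp.linearCombination K fun _ : α => (1 : K)) := by
  intro v w hvw
  ext a
  have eval (u : α →₀ K) : Finsupp.linearCombination K (fun _ => (1 : K)) u = u a := by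
    rw [Finsupp.linearCombination_apply, Finsupp.sum_eq_single a] <;> simp [Subsingleton.elim _ a]
  rwa [eval, eval] at hvw

variable {k : Type} [Field k]

namespace Pmod

variable {y z z' : NPoset} {W : NPoset ⥤ ModuleCat k}

noncomputable def basis (y z : NPoset) : Module.Basis (y ⟶ z) k ((Pmod k y).obj z) :=
  Finsupp.basisSingleOne

lemma map_basis (f : y ⟶ z) (f' : z ⟶ z') :
    (Pmod k y).map f' (basis y z f) = basis y z' (f ≫ f') :=
  Finsupp.mapDomain_single

noncomputable def desc (w : W.obj y) : Pmod k y ⟶ W where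
  app z := ConcreteCategory.ofHom ((basis y z).constr k fun f => W.map f w)
  naturality z z' f' := by
    refine ModuleCat.hom_ext ((basis y z).ext fun f => ?_)
    simp [map_basis]

@[simp] lemma desc_app_basis (w : W.obj y) (f : y ⟶ z) :
    (desc w).app z (basis y z f) = W.map f w := by
  simp [desc]

lemma hom_ext {α β : Pmod k y ⟶ W}
    (h : α.app y (basis y y (𝟙 y)) = β.app y (basis y y (𝟙 y))) : α = β := by
  ext z : 2
  refine ModuleCat.hom_ext ((basis y z).ext fun f => ?_)
  have hf : basis y z f = (Pmod k y).map f (basis y y (𝟙 y)) := by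
    rw [map_basis, Category.id_comp]
  rw [hf, NatTrans.naturality_apply, NatTrans.naturality_apply, h]

noncomputable def coeffSum (x z : NPoset) : (Pmod k x).obj z →ₗ[k] k :=
  Finsupp.linearCombination k fun _ => 1

@[simp] lemma coeffSum_map {x : NPoset} (f : z ⟶ z') (v : (Pmod k x).obj z) :
    coeffSum x z' ((Pmod k x).map f v) = coeffSum x z v :=
  Finsupp.linearCombination_mapDomain (v' := fun _ => (1 : k)) k _ v

lemma coeffSum_injective (x z : NPoset) : Function.Injective (coeffSum (k := k) x z) :=
  Finsupp.linearCombination_one_injective (α := x ⟶ z)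

end Pmod

noncomputable def sumP (k : Type) [Field k] {κ : Type} (h : κ → NPoset) :
    NPoset ⥤ ModuleCat k where
  obj z := ModuleCat.of k (∀ a, (Pmod k (h a)).obj z)
  map f := ModuleCat.ofHom <|
    LinearMap.pi fun a => ((Pmod k (h a)).map f).hom ∘ₗ LinearMap.proj a
  map_id z := by
    ext v a
    simp
  map_comp f f' := by
    ext v a
    simp

namespace sumP

variable {κ : Type} {h : κ → NPoset} {z z' : NPoset} {W : NPoset ⥤ ModuleCat k}

lemma map_apply (f : z ⟶ z') (v : (sumP k h).obj z) (a : κ) :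
    (sumP k h).map f v a = (Pmod k (h a)).map f (v a) := rfl

variable [Fintype κ]

variable (h) in
noncomputable def basis (z : NPoset) : Module.Basis (Σ a, h a ⟶ z) k ((sumP k h).obj z) :=
  Pi.basis fun a => Pmod.basis (h a) z

lemma basis_apply [DecidableEq κ] (a : κ) (f : h a ⟶ z) :
    basis (k := k) h z ⟨a, f⟩ = Pi.single a (Pmod.basis (h a) z f) :=
  Pi.basis_apply _ _

lemma map_basis (f : z ⟶ z') (a : κ) (g : h a ⟶ z) :
    (sumP k h).map f (basis h z ⟨a, g⟩) = basis h z' ⟨a, g ≫ f⟩ := by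
  classical
  funext b
  rw [map_apply, basis_apply, basis_apply, ← Pmod.map_basis]
  exact Pi.apply_single (fun b => (Pmod k (h b)).map f) (fun _ => map_zero _) a _ b

noncomputable def desc (β : ∀ a, Pmod k (h a) ⟶ W) : sumP k h ⟶ W where
  app z := ConcreteCategory.ofHom <|
    (basis h z).constr k fun af => (β af.1).app z (Pmod.basis _ z af.2)
  naturality z z' f := by
    refine ModuleCat.hom_ext ((basis h z).ext fun ⟨a, g⟩ => ?_)
    simp [map_basis, ← Pmod.map_basis]

@[simp] lemma desc_app_basis (β : ∀ a, Pmod k (h a) ⟶ W) (a : κ) (f : h a ⟶ z) :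
    (desc β).app z (basis h z ⟨a, f⟩) = (β a).app z (Pmod.basis (h a) z f) := by
  simp [desc]

noncomputable def lift (w : ∀ a, W.obj (h a)) : sumP k h ⟶ W :=
  desc fun a => Pmod.desc (w a)

lemma lift_app_basis (w : ∀ a, W.obj (h a)) (a : κ) (f : h a ⟶ z) :
    (lift w).app z (basis h z ⟨a, f⟩) = W.map f (w a) := by
  simp [lift]

lemma apply_basis_of_natural (σ : ∀ z, (sumP k h).obj z →ₗ[k] k)
    (hσ : ∀ {z z' : NPoset} (f : z ⟶ z') v, σ z' ((sumP k h).map f v) = σ z v)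
    (a : κ) (f : h a ⟶ z) : σ z (basis h z ⟨a, f⟩) = σ (h a) (basis h (h a) ⟨a, 𝟙 _⟩) := by
  rw [← Category.id_comp f, ← map_basis, hσ]

variable [DecidableEq κ]

noncomputable def ι (a : κ) : Pmod k (h a) ⟶ sumP k h where
  app z := ConcreteCategory.ofHom (LinearMap.single k (fun b => (Pmod k (h b)).obj z) a)
  naturality z z' f := by
    refine ModuleCat.hom_ext (LinearMap.ext fun v => funext fun b => ?_)
    exact (Pi.apply_single (fun b => (Pmod k (h b)).map f) (fun _ => map_zero _) a v b).symm

lemma ι_app_basis (a : κ) (f : h a ⟶ z) :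
    (ι (k := k) a).app z (Pmod.basis (h a) z f) = basis h z ⟨a, f⟩ :=
  (basis_apply a f).symm

lemma hom_ext {α β : sumP k h ⟶ W} (hαβ : ∀ a, ι a ≫ α = ι a ≫ β) : α = β := by
  ext z : 2
  refine ModuleCat.hom_ext ((basis h z).ext fun ⟨a, f⟩ => ?_)
  rw [← ι_app_basis]
  exact congrArg (fun γ : Pmod k (h a) ⟶ W => γ.app z (Pmod.basis (h a) z f)) (hαβ a)

@[simp] lemma ι_desc (β : ∀ a, Pmod k (h a) ⟶ W) (a : κ) : ι a ≫ desc β = β a :=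
  Pmod.hom_ext (by simp [ι_app_basis])

variable (h) in
noncomputable def isColimit : IsColimit (Cofan.mk (sumP k h) (ι (k := k))) :=
  Cofan.IsColimit.mk _ (fun t => desc t.inj) (fun t a => ι_desc t.inj a)
    (fun t _ hm => hom_ext fun a => (hm a).trans (ι_desc t.inj a).symm)

end sumP

lemma isFiniteDirectSumOfP_sumP {κ : Type} [Fintype κ] (h : κ → NPoset) :
    IsFiniteDirectSumOfP k (sumP k h) := by
  classical
  exact ⟨κ, inferInstance, h, sumP.ι, ⟨sumP.isColimit h⟩⟩

lemma IsFiniteDirectSumOfP.exists_iso_sumP {Q : NPoset ⥤ ModuleCat k}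
    (hQ : IsFiniteDirectSumOfP k Q) :
    ∃ (ι : Type) (_ : Fintype ι) (g : ι → NPoset), Nonempty (sumP k g ≅ Q) := by
  classical
  obtain ⟨ι, _, g, _, ⟨hQ⟩⟩ := hQ
  exact ⟨ι, inferInstance, g, ⟨(sumP.isColimit g).coconePointUniqueUpToIso hQ⟩⟩

theorem sumP.exists_range_eq_ker {ι : Type} [Fintype ι] (g : ι → NPoset)
    (σ : ∀ z, (sumP k g).obj z →ₗ[k] k)
    (hσ : ∀ {z z' : NPoset} (f : z ⟶ z') v, σ z' ((sumP k g).map f v) = σ z v) :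
    ∃ (κ : Type) (_ : Fintype κ) (h : κ → NPoset) (d : sumP k h ⟶ sumP k g),
      ∀ z, LinearMap.range (d.app z).hom = LinearMap.ker (σ z) := by
  classical
  let c : ι → k := fun j => σ (g j) (basis g (g j) ⟨j, 𝟙 _⟩)
  have hc : ∀ z j (f : g j ⟶ z), σ z (basis g z ⟨j, f⟩) = c j :=
    fun _ => apply_basis_of_natural σ hσ
  let rel (i j : ι) : (sumP k g).obj (g i ⊔ g j) :=
    c j • basis g _ ⟨i, homOfLE le_sup_left⟩ - c i • basis g _ ⟨j, homOfLE le_sup_right⟩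
  have σ_rel : ∀ i j, σ _ (rel i j) = 0 := fun i j => by
    rw [map_sub, map_smul, map_smul, hc, hc, smul_eq_mul, smul_eq_mul, mul_comm, sub_self]
  have map_rel : ∀ {z} i j (F : g i ⊔ g j ⟶ z), (sumP k g).map F (rel i j) =
      c j • basis g z ⟨i, homOfLE le_sup_left ≫ F⟩
        - c i • basis g z ⟨j, homOfLE le_sup_right ≫ F⟩ :=
    fun i j F => by rw [map_sub, map_smul, map_smul, map_basis, map_basis]
  let h : (ι × ι) ⊕ {j // c j = 0} → NPoset :=
    Sum.elim (fun ij => g ij.1 ⊔ g ij.2) (fun j => g j)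
  let r : ∀ a, (sumP k g).obj (h a)
    | .inl (i, j) => rel i j
    | .inr j => basis g _ ⟨j.1, 𝟙 _⟩
  have hr : ∀ a, σ (h a) (r a) = 0
    | .inl (i, j) => σ_rel i j
    | .inr ⟨_, hj⟩ => hj
  let d : sumP k h ⟶ sumP k g := lift r
  have hd : ∀ z a (f : h a ⟶ z), d.app z (basis h z ⟨a, f⟩) = (sumP k g).map f (r a) :=
    fun _ => lift_app_basis r
  have hd_inl : ∀ {z} i j (F : g i ⊔ g j ⟶ z), d.app z (basis h z ⟨.inl (i, j), F⟩) =
      c j • basis g z ⟨i, homOfLE le_sup_left ≫ F⟩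
        - c i • basis g z ⟨j, homOfLE le_sup_right ≫ F⟩ :=
    fun i j F => (hd _ (.inl (i, j)) F).trans (map_rel i j F)
  have hd_inr : ∀ {z} j (hj : c j = 0) (f : g j ⟶ z),
      d.app z (basis h z ⟨.inr ⟨j, hj⟩, f⟩) = basis g z ⟨j, f⟩ :=
    fun j hj f => (hd _ (.inr ⟨j, hj⟩) f).trans <| map_basis _ _ _
  refine ⟨_, inferInstance, h, d, fun z => le_antisymm ?_ ?_⟩
  · rw [LinearMap.range_le_ker_iff]
    refine (basis h z).ext fun ⟨a, f⟩ => ?_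
    rw [LinearMap.comp_apply, hd, hσ, hr, LinearMap.zero_apply]
  · refine LinearMap.ker_le_of_smul_sub_smul_mem (σ z) (basis g z).span_eq ?_ ?_
    · rintro ⟨i, f⟩ ⟨j, f'⟩
      refine ⟨_, (hd_inl i j (homOfLE (sup_le (leOfHom f) (leOfHom f')))).trans ?_⟩
      rw [hc, hc]
      -- parallel morphisms of a preorder category are definitionally equal
      rfl
    · rintro ⟨j, f⟩ hj
      rw [hc] at hj
      exact ⟨_, hd_inr j hj f⟩

theorem sumP.exists_exact_of_injective_into_Pmod {ι : Type} [Fintype ι] {g : ι → NPoset}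
    {V : NPoset ⥤ ModuleCat k} {x : NPoset} (p : sumP k g ⟶ V) (ν : V ⟶ Pmod k x)
    (hν : ∀ z, Function.Injective (ν.app z)) :
    ∃ (κ : Type) (_ : Fintype κ) (h : κ → NPoset) (d : sumP k h ⟶ sumP k g),
      ∀ z, Function.Exact (d.app z) (p.app z) := by
  let σ z := (Pmod.coeffSum x z ∘ₗ (ν.app z).hom) ∘ₗ (p.app z).hom
  have hσ : ∀ {z z'} (f : z ⟶ z') v, σ z' ((sumP k g).map f v) = σ z v := fun f v => by
    simp [σ, NatTrans.naturality_apply]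
  have hker : ∀ z, LinearMap.ker (σ z) = LinearMap.ker (p.app z).hom := fun z =>
    LinearMap.ker_comp_of_ker_eq_bot _ <| LinearMap.ker_eq_bot.2 <|
      (Pmod.coeffSum_injective x z).comp (hν z)
  obtain ⟨κ, _, h, d, hd⟩ := exists_range_eq_ker g σ hσ
  exact ⟨κ, inferInstance, h, d, fun z =>
    LinearMap.exact_iff.2 ((hker z).symm.trans (hd z).symm)⟩

/-- Over a field `k`, every finitely generated subfunctor `V` of `P x` is finitely presented:
if `V` admits an epimorphism from a finite direct sum of representables, then `V` is the
cokernel of a morphism between two finite direct sums of representables. -/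
theorem stmt7 {k : Type} [Field k] (x : NPoset) (V : NPoset ⥤ ModuleCat k)
    (ν : V ⟶ Pmod k x) (hmono : ∀ z : NPoset, Function.Injective (ν.app z))
    (F : NPoset ⥤ ModuleCat k) (hF : IsFiniteDirectSumOfP k F) (e : F ⟶ V)
    (he : ∀ z : NPoset, Function.Surjective (e.app z)) :
    ∃ (Q1 Q0 : NPoset ⥤ ModuleCat k) (d : Q1 ⟶ Q0) (p : Q0 ⟶ V),
      IsFiniteDirectSumOfP k Q1 ∧ IsFiniteDirectSumOfP k Q0 ∧
      (∀ z : NPoset, Function.Surjective (p.app z)) ∧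
      (∀ z : NPoset, Function.Exact (d.app z) (p.app z)) := by
  obtain ⟨ι, _, g, ⟨θ⟩⟩ := hF.exists_iso_sumP
  obtain ⟨κ, _, h, d, hexact⟩ := sumP.exists_exact_of_injective_into_Pmod (θ.hom ≫ e) ν hmono
  refine ⟨sumP k h, sumP k g, d, θ.hom ≫ e, isFiniteDirectSumOfP_sumP h,
    isFiniteDirectSumOfP_sumP g, fun z => ?_, hexact⟩
  rw [NatTrans.comp_app, ConcreteCategory.coe_comp]
  exact (he z).comp (ConcreteCategory.bijective_of_isIso (θ.hom.app z)).2
end
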